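/- Let X be a real vector space, let ‖·‖₁ be a norm on X, let ‖·‖₂ be an equivalent norm on X that is locally uniformly convex, and let ε > 0. Then the function |||x||| := (‖x‖₁² + ε‖x‖₂²)^{1/2} is a norm on X, it is equivalent to ‖·‖₁, it satisfies ‖x‖₁ ≤ |||x||| for all x, and it is locally uniformly convex. -/

import Mathlib

open Filter Topology Set

section Defs

variable {X : Type*} [AddCommGroup X] [Module ℝ X]

/-- `N` is a norm on the real vector space `X`. -/
def IsNorm (N : X → ℝ) : Prop :=
  (∀ x : X, N x = 0 ↔ x = 0) ∧
  (∀ (a : ℝ) (x : X), N (a • x) = |a| * N x) ∧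
  (∀ x y : X, N (x + y) ≤ N x + N y)

/-- `N` is locally uniformly convex. -/
def IsLUR (N : X → ℝ) : Prop :=
  ∀ x : X, N x = 1 → ∀ y : ℕ → X, (∀ n, N (y n) = 1) →
    Filter.Tendsto (fun n => N ((2 : ℝ)⁻¹ • (x + y n))) Filter.atTop (nhds 1) →
    Filter.Tendsto (fun n => N (x - y n)) Filter.atTop (nhds 0)

/-- `R` is a nearest point map onto `K` with respect to the norm `N`. -/
def IsNearestPointMap (N : X → ℝ) (K : Set X) (R : X → X) : Prop :=
  ∀ x : X, R x ∈ K ∧ N (x - R x) = sInf ((fun c => N (x - c)) '' K)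

/-- `R` is continuous with respect to the norm `N`. -/
def NContinuous (N : X → ℝ) (R : X → X) : Prop :=
  ∀ x : X, ∀ ε > (0 : ℝ), ∃ δ > (0 : ℝ), ∀ y : X, N (x - y) < δ → N (R x - R y) < ε

/-- `R` is uniformly continuous with respect to the norm `N`. -/
def NUniformContinuous (N : X → ℝ) (R : X → X) : Prop :=
  ∀ ε > (0 : ℝ), ∃ δ > (0 : ℝ), ∀ x y : X, N (x - y) < δ → N (R x - R y) < ε

end Defs

section Helpers
variable {X : Type*} [AddCommGroup X] [Module ℝ X]

lemma IsNorm.zero' {N : X → ℝ} (h : IsNorm N) : N 0 = 0 := (h.1 0).2 rfl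

lemma IsNorm.neg' {N : X → ℝ} (h : IsNorm N) (x : X) : N (-x) = N x := by
  have := h.2.1 (-1) x; simpa using this

lemma IsNorm.nng {N : X → ℝ} (h : IsNorm N) (x : X) : 0 ≤ N x := by
  have h2 := h.2.2 x (-x)
  rw [add_neg_cancel, h.zero', h.neg'] at h2; linarith

lemma IsNorm.sub_le' {N : X → ℝ} (h : IsNorm N) (u v : X) : N u - N v ≤ N (u + v) := by
  have := h.2.2 (u + v) (-v)
  rw [add_neg_cancel_right, h.neg'] at this; linarith

lemma mink (ε : ℝ) (hε : 0 ≤ ε) (A B A' B' : ℝ) :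
    Real.sqrt ((A+A')^2 + ε*(B+B')^2) ≤ Real.sqrt (A^2+ε*B^2) + Real.sqrt (A'^2+ε*B'^2) := by
  have h1 : 0 ≤ A^2+ε*B^2 := by positivity
  have h2 : 0 ≤ A'^2+ε*B'^2 := by positivity
  have hst : A*A'+ε*(B*B') ≤ Real.sqrt (A^2+ε*B^2) * Real.sqrt (A'^2+ε*B'^2) := by
    rw [← Real.sqrt_mul h1]
    have hcs : (A*A'+ε*(B*B'))^2 ≤ (A^2+ε*B^2)*(A'^2+ε*B'^2) := by
      nlinarith [mul_nonneg hε (sq_nonneg (A*B'-A'*B)), sq_nonneg (A*B'-A'*B)]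
    calc A*A'+ε*(B*B') ≤ |A*A'+ε*(B*B')| := le_abs_self _
      _ = Real.sqrt ((A*A'+ε*(B*B'))^2) := (Real.sqrt_sq_eq_abs _).symm
      _ ≤ _ := Real.sqrt_le_sqrt hcs
  have key : (A+A')^2 + ε*(B+B')^2 ≤ (Real.sqrt (A^2+ε*B^2) + Real.sqrt (A'^2+ε*B'^2))^2 := by
    have e1 := Real.sq_sqrt h1
    have e2 := Real.sq_sqrt h2
    nlinarith [hst]
  calc Real.sqrt ((A+A')^2 + ε*(B+B')^2)
      ≤ Real.sqrt ((Real.sqrt (A^2+ε*B^2) + Real.sqrt (A'^2+ε*B'^2))^2) := Real.sqrt_le_sqrt key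
    _ = _ := Real.sqrt_sq (by positivity)

lemma normpart {N₁ N₂ : X → ℝ} (h₁ : IsNorm N₁) (h₂ : IsNorm N₂) (ε : ℝ) (hε : 0 < ε) :
    IsNorm (fun x : X => Real.sqrt (N₁ x ^ 2 + ε * N₂ x ^ 2)) := by
  refine ⟨fun x => ?_, fun c x => ?_, fun x y => ?_⟩
  · simp only [Real.sqrt_eq_zero']
    constructor
    · intro h
      have h1 := sq_nonneg (N₁ x)
      have h2 := mul_nonneg hε.le (sq_nonneg (N₂ x))
      have : N₁ x ^ 2 = 0 := by linarith
      exact (h₁.1 x).1 (by nlinarith [h₁.nng x])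
    · rintro rfl
      rw [h₁.zero', h₂.zero']; norm_num
  · simp only [h₁.2.1, h₂.2.1, mul_pow, sq_abs]
    rw [show c^2 * N₁ x^2 + ε * (c^2 * N₂ x^2) = c^2 * (N₁ x^2 + ε * N₂ x^2) by ring,
      Real.sqrt_mul (sq_nonneg c), Real.sqrt_sq_eq_abs]
  · have t1 := h₁.2.2 x y
    have t2 := h₂.2.2 x y
    calc Real.sqrt (N₁ (x+y)^2 + ε*N₂ (x+y)^2)
        ≤ Real.sqrt ((N₁ x + N₁ y)^2 + ε*(N₂ x + N₂ y)^2) := by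
          apply Real.sqrt_le_sqrt
          have e1 : N₁ (x+y)^2 ≤ (N₁ x + N₁ y)^2 := by nlinarith [h₁.nng (x+y)]
          have e2 : N₂ (x+y)^2 ≤ (N₂ x + N₂ y)^2 := by nlinarith [h₂.nng (x+y)]
          nlinarith
      _ ≤ _ := mink ε hε.le _ _ _ _

end Helpers

section LUR
variable {X : Type*} [AddCommGroup X] [Module ℝ X]

lemma lurpart {N₁ N₂ : X → ℝ} (h₁ : IsNorm N₁) (h₂ : IsNorm N₂)
    (a : ℝ) (ha : 0 < a)
    (heq : ∀ x : X, a * N₁ x ≤ N₂ x)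
    (hl₂ : IsLUR N₂) (ε : ℝ) (hε : 0 < ε) :
    IsLUR (fun x : X => Real.sqrt (N₁ x ^ 2 + ε * N₂ x ^ 2)) := by
  intro x hx y hy hlim
  simp only at hx hy hlim ⊢
  set A := N₁ x with hA
  set B := N₂ x with hB
  set An := fun n => N₁ (y n) with hAn
  set Bn := fun n => N₂ (y n) with hBndef
  have hx1 : A^2 + ε*B^2 = 1 := Real.sqrt_eq_one.mp hx
  have hy1 : ∀ n, (An n)^2 + ε*(Bn n)^2 = 1 := fun n => Real.sqrt_eq_one.mp (hy n)
  set P := fun n => N₁ ((2:ℝ)⁻¹ • (x + y n)) with hP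
  set Q := fun n => N₂ ((2:ℝ)⁻¹ • (x + y n)) with hQ
  set S := fun n => (P n)^2 + ε * (Q n)^2 with hS
  have hSnn : ∀ n, 0 ≤ S n := fun n => by positivity
  have hStend : Tendsto S atTop (𝓝 1) := by
    have := hlim.mul hlim
    rw [mul_one] at this
    exact this.congr fun n => Real.mul_self_sqrt (hSnn n)
  have hPle : ∀ n, P n ≤ (A + An n)/2 := by
    intro n
    show N₁ ((2:ℝ)⁻¹ • (x + y n)) ≤ (N₁ x + N₁ (y n))/2
    rw [h₁.2.1, show |(2:ℝ)⁻¹| = 2⁻¹ by norm_num]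
    linarith [h₁.2.2 x (y n)]
  have hQle : ∀ n, Q n ≤ (B + Bn n)/2 := by
    intro n
    show N₂ ((2:ℝ)⁻¹ • (x + y n)) ≤ (N₂ x + N₂ (y n))/2
    rw [h₂.2.1, show |(2:ℝ)⁻¹| = 2⁻¹ by norm_num]
    linarith [h₂.2.2 x (y n)]
  set G1 := fun n => ((A - An n)/2)^2 + ε * ((B - Bn n)/2)^2 with hG1def
  set G2 := fun n => ((A + An n)/2)^2 + ε * ((B + Bn n)/2)^2 - S n with hG2def
  have hPsq : ∀ n, (P n)^2 ≤ ((A + An n)/2)^2 := by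
    intro n
    have h1 := hPle n
    have p1 : 0 ≤ P n := h₁.nng _
    nlinarith
  have hQsq : ∀ n, (Q n)^2 ≤ ((B + Bn n)/2)^2 := by
    intro n
    have h1 := hQle n
    have p1 : 0 ≤ Q n := h₂.nng _
    nlinarith
  have hG2nn : ∀ n, 0 ≤ G2 n := by
    intro n
    have := hPsq n; have := hQsq n
    simp only [hG2def, hS]
    nlinarith
  have hkey : ∀ n, G1 n + G2 n = 1 - S n := by
    intro n
    simp only [hG1def, hG2def]
    nlinarith [hx1, hy1 n]
  have hG1nn : ∀ n, 0 ≤ G1 n := fun n => by positivity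
  have hsum : Tendsto (fun n => 1 - S n) atTop (𝓝 0) := by
    have := (tendsto_const_nhds (x := (1:ℝ)) (f := atTop)).sub hStend
    simpa using this
  have hG1t : Tendsto G1 atTop (𝓝 0) :=
    tendsto_of_tendsto_of_tendsto_of_le_of_le' tendsto_const_nhds hsum
      (Eventually.of_forall fun n => hG1nn n)
      (Eventually.of_forall fun n => by have := hG2nn n; have := hkey n; linarith)
  have hG2t : Tendsto G2 atTop (𝓝 0) :=
    tendsto_of_tendsto_of_tendsto_of_le_of_le' tendsto_const_nhds hsum
      (Eventually.of_forall fun n => hG2nn n)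
      (Eventually.of_forall fun n => by have := hG1nn n; have := hkey n; linarith)
  -- Bn → B
  have hG1inv : Tendsto (fun n => ε⁻¹ * G1 n) atTop (𝓝 0) := by
    simpa using hG1t.const_mul ε⁻¹
  have hBsq : Tendsto (fun n => ((B - Bn n)/2)^2) atTop (𝓝 0) := by
    refine tendsto_of_tendsto_of_tendsto_of_le_of_le' tendsto_const_nhds hG1inv
      (Eventually.of_forall fun n => by positivity)
      (Eventually.of_forall fun n => ?_)
    have h1 : ε * ((B - Bn n)/2)^2 ≤ G1 n := by
      simp only [hG1def]; nlinarith [sq_nonneg ((A - An n)/2)]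
    rw [← mul_le_mul_iff_right₀ hε]
    calc ε * ((B - Bn n)/2)^2 ≤ G1 n := h1
      _ = ε * (ε⁻¹ * G1 n) := by field_simp
  have habs : Tendsto (fun n => |(B - Bn n)/2|) atTop (𝓝 0) := by
    have := hBsq.sqrt
    rw [Real.sqrt_zero] at this
    exact this.congr fun n => Real.sqrt_sq_eq_abs _
  have hdiff : Tendsto (fun n => (B - Bn n)/2) atTop (𝓝 0) :=
    (tendsto_zero_iff_abs_tendsto_zero _).mpr habs
  have hBnt : Tendsto Bn atTop (𝓝 B) := by
    have : Tendsto (fun n => B - 2*((B - Bn n)/2)) atTop (𝓝 (B - 2*0)) :=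
      tendsto_const_nhds.sub (hdiff.const_mul 2)
    rw [mul_zero, sub_zero] at this
    exact this.congr fun n => by ring
  -- Q → B
  have hmid2 : Tendsto (fun n => ((B + Bn n)/2)^2) atTop (𝓝 (B^2)) := by
    have h1 : Tendsto (fun n => (B + Bn n)/2) atTop (𝓝 B) := by
      have := (tendsto_const_nhds (x := B) (f := atTop)).add hBnt
      have h2 := this.const_mul (2:ℝ)⁻¹
      have : (2:ℝ)⁻¹ * (B + B) = B := by ring
      rw [this] at h2
      exact h2.congr fun n => by ring
    have := h1.mul h1
    rw [← sq] at this
    exact this.congr fun n => (sq _).symm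
  have hQ2t : Tendsto (fun n => (Q n)^2) atTop (𝓝 (B^2)) := by
    refine tendsto_of_tendsto_of_tendsto_of_le_of_le'
      (g := fun n => ((B + Bn n)/2)^2 - ε⁻¹ * G2 n) (h := fun n => ((B + Bn n)/2)^2)
      ?_ hmid2 (Eventually.of_forall fun n => ?_) (Eventually.of_forall fun n => hQsq n)
    · have := hmid2.sub hG1inv
      have h2 := hmid2.sub (by simpa using hG2t.const_mul ε⁻¹ :
        Tendsto (fun n => ε⁻¹ * G2 n) atTop (𝓝 0))
      simpa using h2
    · have h1 : ε * ((B + Bn n)/2)^2 - ε * (Q n)^2 ≤ G2 n := by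
        simp only [hG2def, hS]
        nlinarith [hPsq n]
      have h2 : ((B + Bn n)/2)^2 - (Q n)^2 ≤ ε⁻¹ * G2 n := by
        rw [← mul_le_mul_iff_right₀ hε]
        calc ε * (((B + Bn n)/2)^2 - (Q n)^2) = ε * ((B + Bn n)/2)^2 - ε * (Q n)^2 := by ring
          _ ≤ G2 n := h1
          _ = ε * (ε⁻¹ * G2 n) := by field_simp
      linarith
  have hQt : Tendsto Q atTop (𝓝 B) := by
    have := hQ2t.sqrt
    rw [Real.sqrt_sq (h₂.nng x)] at this
    exact this.congr fun n => Real.sqrt_sq (h₂.nng _)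
  -- B > 0
  have hBpos : 0 < B := by
    rcases lt_or_eq_of_le (h₂.nng x) with h | h
    · exact h
    · exfalso
      have hx0 : x = 0 := (h₂.1 x).1 h.symm
      have hA0 : A = 0 := by rw [hA, hx0, h₁.zero']
      have hB0' : B = 0 := by rw [hB, hx0, h₂.zero']
      rw [hA0, hB0'] at hx1
      norm_num at hx1
  have hB0 : B ≠ 0 := ne_of_gt hBpos
  -- eventually Bn n > B/2
  have hev : ∀ᶠ n in atTop, B/2 < Bn n := hBnt.eventually (eventually_gt_nhds (by linarith))
  -- renormalized sequences
  set x' : X := B⁻¹ • x with hx'def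
  set y' : ℕ → X := fun n => if B/2 < Bn n then (Bn n)⁻¹ • y n else x' with hy'def
  have hx'1 : N₂ x' = 1 := by
    rw [hx'def, h₂.2.1, abs_of_pos (inv_pos.mpr hBpos), ← hB, inv_mul_cancel₀ hB0]
  have hy'1 : ∀ n, N₂ (y' n) = 1 := by
    intro n
    rw [hy'def]
    by_cases h : B/2 < Bn n
    · have hBn0 : 0 < Bn n := lt_trans (by linarith) h
      simp only [if_pos h]
      rw [h₂.2.1, abs_of_pos (inv_pos.mpr hBn0)]
      exact inv_mul_cancel₀ (ne_of_gt hBn0)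
    · simp only [if_neg h]; exact hx'1
  -- midpoint convergence for renormalized
  have hBninv : Tendsto (fun n => (Bn n)⁻¹) atTop (𝓝 B⁻¹) := hBnt.inv₀ hB0
  set r := fun n => |2⁻¹ * ((Bn n)⁻¹ - B⁻¹)| * Bn n with hrdef
  have hrt : Tendsto r atTop (𝓝 0) := by
    have h1 : Tendsto (fun n => |2⁻¹ * ((Bn n)⁻¹ - B⁻¹)|) atTop (𝓝 (|2⁻¹ * (B⁻¹ - B⁻¹)|)) :=
      ((hBninv.sub_const B⁻¹).const_mul 2⁻¹).abs
    have h2 := h1.mul hBnt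
    simp only [sub_self, mul_zero, abs_zero, zero_mul] at h2; exact h2
  have hBQt : Tendsto (fun n => B⁻¹ * Q n) atTop (𝓝 1) := by
    have := hQt.const_mul B⁻¹
    rwa [inv_mul_cancel₀ hB0] at this
  have hmid : Tendsto (fun n => N₂ ((2:ℝ)⁻¹ • (x' + y' n))) atTop (𝓝 1) := by
    refine tendsto_of_tendsto_of_tendsto_of_le_of_le'
      (g := fun n => B⁻¹ * Q n - r n) (h := fun n => B⁻¹ * Q n + r n)
      (by simpa using hBQt.sub hrt) (by simpa using hBQt.add hrt) ?_ ?_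
    · filter_upwards [hev] with n hn
      have hBn0 : 0 < Bn n := lt_trans (by linarith) hn
      have hdecomp : (2:ℝ)⁻¹ • (x' + y' n)
          = B⁻¹ • ((2:ℝ)⁻¹ • (x + y n)) + (2⁻¹ * ((Bn n)⁻¹ - B⁻¹)) • y n := by
        rw [hy'def]; simp only [if_pos hn, hx'def]
        module
      rw [hdecomp]
      have e1 : N₂ (B⁻¹ • ((2:ℝ)⁻¹ • (x + y n))) = B⁻¹ * Q n := by
        rw [h₂.2.1, abs_of_pos (inv_pos.mpr hBpos)]
      have e2 : N₂ ((2⁻¹ * ((Bn n)⁻¹ - B⁻¹)) • y n) = r n := by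
        rw [h₂.2.1, hrdef]
      have := h₂.sub_le' (B⁻¹ • ((2:ℝ)⁻¹ • (x + y n))) ((2⁻¹ * ((Bn n)⁻¹ - B⁻¹)) • y n)
      rw [e1, e2] at this
      linarith
    · filter_upwards [hev] with n hn
      have hdecomp : (2:ℝ)⁻¹ • (x' + y' n)
          = B⁻¹ • ((2:ℝ)⁻¹ • (x + y n)) + (2⁻¹ * ((Bn n)⁻¹ - B⁻¹)) • y n := by
        rw [hy'def]; simp only [if_pos hn, hx'def]
        module
      rw [hdecomp]
      have e1 : N₂ (B⁻¹ • ((2:ℝ)⁻¹ • (x + y n))) = B⁻¹ * Q n := by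
        rw [h₂.2.1, abs_of_pos (inv_pos.mpr hBpos)]
      have e2 : N₂ ((2⁻¹ * ((Bn n)⁻¹ - B⁻¹)) • y n) = r n := by
        rw [h₂.2.1, hrdef]
      have := h₂.2.2 (B⁻¹ • ((2:ℝ)⁻¹ • (x + y n))) ((2⁻¹ * ((Bn n)⁻¹ - B⁻¹)) • y n)
      rw [e1, e2] at this
      linarith
  have hconv : Tendsto (fun n => N₂ (x' - y' n)) atTop (𝓝 0) := hl₂ x' hx'1 y' hy'1 hmid
  -- N₂ (x - y n) → 0
  have hN2t : Tendsto (fun n => N₂ (x - y n)) atTop (𝓝 0) := by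
    set w := fun n => B * N₂ (x' - y' n) + |B * (Bn n)⁻¹ - 1| * Bn n with hwdef
    have hwt : Tendsto w atTop (𝓝 0) := by
      have h1 := hconv.const_mul B
      have h2 : Tendsto (fun n => |B * (Bn n)⁻¹ - 1| * Bn n) atTop (𝓝 (|B * B⁻¹ - 1| * B)) :=
        ((hBninv.const_mul B).sub_const 1).abs.mul hBnt
      rw [mul_inv_cancel₀ hB0] at h2
      simp only [sub_self, abs_zero, zero_mul] at h2
      have := h1.add h2
      simpa using this
    refine tendsto_of_tendsto_of_tendsto_of_le_of_le' tendsto_const_nhds hwt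
      (Eventually.of_forall fun n => h₂.nng _) ?_
    filter_upwards [hev] with n hn
    have hBn0 : 0 < Bn n := lt_trans (by linarith) hn
    have hdecomp : x - y n = B • (x' - y' n) + (B * (Bn n)⁻¹ - 1) • y n := by
      rw [hy'def]; simp only [if_pos hn, hx'def]
      rw [smul_sub, smul_smul, smul_smul, mul_inv_cancel₀ hB0, one_smul, sub_smul, one_smul]
      abel
    rw [hdecomp]
    calc N₂ (B • (x' - y' n) + (B * (Bn n)⁻¹ - 1) • y n)
        ≤ N₂ (B • (x' - y' n)) + N₂ ((B * (Bn n)⁻¹ - 1) • y n) := h₂.2.2 _ _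
      _ = B * N₂ (x' - y' n) + |B * (Bn n)⁻¹ - 1| * Bn n := by
          rw [h₂.2.1, h₂.2.1, abs_of_pos hBpos]
      _ = w n := rfl
  -- N₁ (x - y n) → 0
  have hN1t : Tendsto (fun n => N₁ (x - y n)) atTop (𝓝 0) := by
    have hup : Tendsto (fun n => a⁻¹ * N₂ (x - y n)) atTop (𝓝 0) := by
      simpa using hN2t.const_mul a⁻¹
    refine tendsto_of_tendsto_of_tendsto_of_le_of_le' tendsto_const_nhds hup
      (Eventually.of_forall fun n => h₁.nng _) (Eventually.of_forall fun n => ?_)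
    have h2 : a * N₁ (x - y n) ≤ N₂ (x - y n) := heq _
    have h3 : a⁻¹ * (a * N₁ (x - y n)) ≤ a⁻¹ * N₂ (x - y n) :=
      mul_le_mul_of_nonneg_left h2 (inv_pos.mpr ha).le
    rw [← mul_assoc, inv_mul_cancel₀ (ne_of_gt ha), one_mul] at h3
    exact h3
  -- conclude
  have h1 : Tendsto (fun n => N₁ (x - y n)^2 + ε * N₂ (x - y n)^2) atTop (𝓝 0) := by
    have e1 := hN1t.mul hN1t
    have e2 := (hN2t.mul hN2t).const_mul ε
    have := e1.add e2
    simp only [mul_zero, zero_mul, add_zero] at this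
    exact this.congr fun n => by ring
  have := h1.sqrt
  rw [Real.sqrt_zero] at this
  exact this
end LUR


theorem statement16 {X : Type*} [AddCommGroup X] [Module ℝ X] (N₁ N₂ : X → ℝ)
    (h₁ : IsNorm N₁) (h₂ : IsNorm N₂)
    (a b : ℝ) (ha : 0 < a) (hb : 0 < b)
    (heq : ∀ x : X, a * N₁ x ≤ N₂ x ∧ N₂ x ≤ b * N₁ x)
    (hl₂ : IsLUR N₂) (ε : ℝ) (hε : 0 < ε) :
    IsNorm (fun x : X => Real.sqrt (N₁ x ^ 2 + ε * N₂ x ^ 2)) ∧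
    (∃ a' b' : ℝ, 0 < a' ∧ 0 < b' ∧
      ∀ x : X, a' * N₁ x ≤ Real.sqrt (N₁ x ^ 2 + ε * N₂ x ^ 2) ∧
        Real.sqrt (N₁ x ^ 2 + ε * N₂ x ^ 2) ≤ b' * N₁ x) ∧
    (∀ x : X, N₁ x ≤ Real.sqrt (N₁ x ^ 2 + ε * N₂ x ^ 2)) ∧
    IsLUR (fun x : X => Real.sqrt (N₁ x ^ 2 + ε * N₂ x ^ 2)) := by
  have hlow : ∀ x : X, N₁ x ≤ Real.sqrt (N₁ x ^ 2 + ε * N₂ x ^ 2) := by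
    intro x
    calc N₁ x = Real.sqrt (N₁ x ^ 2) := (Real.sqrt_sq (h₁.nng x)).symm
      _ ≤ _ := Real.sqrt_le_sqrt (by nlinarith [mul_nonneg hε.le (sq_nonneg (N₂ x))])
  refine ⟨normpart h₁ h₂ ε hε, ⟨1, Real.sqrt (1 + ε * b^2), one_pos,
    Real.sqrt_pos.mpr (by positivity), fun x => ⟨by simpa using hlow x, ?_⟩⟩, hlow,
    lurpart h₁ h₂ a ha (fun x => (heq x).1) hl₂ ε hε⟩
  have h1 : N₂ x ^ 2 ≤ b^2 * N₁ x ^2 := by nlinarith [(heq x).2, h₂.nng x, h₁.nng x, hb]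
  calc Real.sqrt (N₁ x ^ 2 + ε * N₂ x ^ 2)
      ≤ Real.sqrt ((1 + ε * b^2) * N₁ x ^ 2) := Real.sqrt_le_sqrt (by nlinarith)
    _ = Real.sqrt (1 + ε * b^2) * N₁ x := by
        rw [Real.sqrt_mul (by positivity), Real.sqrt_sq (h₁.nng x)]
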